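/- The pivots of the Neville elimination of L^{(q,α)} are p_{1,1} = 1 and p_{i,i} = q^{binom(i-1,2)} for 2 ≤ i ≤ n+1; equivalently, the determinant of L^{(q,α)} equals q^{∑_{i=1}^{n} binom(i,2)} = q^{binom(n+1,3)}. -/

import Mathlib

open Finset Matrix

noncomputable def qInt (q : ℝ) (m : ℕ) : ℝ := ∑ i ∈ Finset.range m, q ^ i

noncomputable def qFact (q : ℝ) (m : ℕ) : ℝ := ∏ i ∈ Finset.range m, qInt q (i + 1)

noncomputable def qBinom (q : ℝ) (m k : ℕ) : ℝ :=
  if k ≤ m then qFact q m / (qFact q k * qFact q (m - k)) else 0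

noncomputable def Lmat (q α : ℝ) (n : ℕ) : Matrix (Fin (n + 1)) (Fin (n + 1)) ℝ :=
  Matrix.of fun i j =>
    if j.1 = 0 then (if i.1 = 0 then 1 else 0)
    else if j.1 ≤ i.1 then
      (-α * qInt q i.1) ^ (i.1 - j.1) * q ^ (j.1.choose 2) * qBinom q (i.1 - 1) (i.1 - j.1)
    else 0

noncomputable def nevilleStep (n k : ℕ) (B : Matrix (Fin (n + 1)) (Fin (n + 1)) ℝ) :
    Matrix (Fin (n + 1)) (Fin (n + 1)) ℝ :=
  Matrix.of fun i j =>
    let r : Fin (n + 1) := ⟨i.1 - 1, Nat.lt_of_le_of_lt (Nat.sub_le _ _) i.2⟩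
    let c : Fin (n + 1) := ⟨min (k - 1) n, Nat.lt_succ_of_le (min_le_right _ _)⟩
    if 1 ≤ k ∧ k ≤ i.1 ∧ k ≤ j.1 ∧ B r c ≠ 0 then
      B i j - (B i c / B r c) * B r j
    else B i j

/-- `nevilleIter n A k` is the matrix `A^{(k)}` of the Neville elimination of `A`
(with `A^{(1)} = A`, and `A^{(0)} = A` by convention). -/
noncomputable def nevilleIter (n : ℕ) (A : Matrix (Fin (n + 1)) (Fin (n + 1)) ℝ) :
    ℕ → Matrix (Fin (n + 1)) (Fin (n + 1)) ℝ
  | 0 => A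
  | k + 1 => nevilleStep n k (nevilleIter n A k)


/-!
`L^{(q,α)}` is lower triangular with diagonal entries `q^{binom(i-1,2)}`. In a Neville step on a
lower triangular matrix, row `i-1` vanishes in every column `j ≥ i`, so subtracting a multiple of
it from row `i` changes no entry on or above the diagonal. Hence all iterates stay lower
triangular with the diagonal of `L^{(q,α)}`, the pivots are its diagonal entries, and the
determinant is their product, `q^{∑ binom(i,2)} = q^{binom(n+1,3)}` by the hockey-stick identity.
-/

lemma qInt_pos {q : ℝ} (hq : 0 ≤ q) {m : ℕ} (hm : 0 < m) : 0 < qInt q m :=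
  Finset.sum_pos' (fun i _ => pow_nonneg hq i) ⟨0, mem_range.mpr hm, by simp⟩

lemma qFact_pos {q : ℝ} (hq : 0 ≤ q) (m : ℕ) : 0 < qFact q m :=
  Finset.prod_pos fun i _ => qInt_pos hq i.succ_pos

lemma qBinom_zero_right {q : ℝ} (hq : 0 ≤ q) (m : ℕ) : qBinom q m 0 = 1 := by
  have hq0 : qFact q 0 = 1 := prod_range_zero _
  rw [qBinom, if_pos m.zero_le, Nat.sub_zero, hq0, one_mul, div_self (qFact_pos hq m).ne']

lemma isLowerTriangular_Lmat (q α : ℝ) (n : ℕ) : (Lmat q α n).IsLowerTriangular := by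
  intro i j hij
  have hij : i.1 < j.1 := hij
  simp only [Lmat, of_apply]
  rw [if_neg (by omega), if_neg (by omega)]

lemma Lmat_diag {q : ℝ} (hq : 0 ≤ q) (α : ℝ) {n : ℕ} (i : Fin (n + 1)) :
    Lmat q α n i i = q ^ (i.1.choose 2) := by
  simp only [Lmat, of_apply]
  by_cases hi : i.1 = 0
  · simp [hi]
  · rw [if_neg hi, if_pos le_rfl, Nat.sub_self, qBinom_zero_right hq, pow_zero, one_mul, mul_one]

section Neville

variable {n : ℕ} {B : Matrix (Fin (n + 1)) (Fin (n + 1)) ℝ}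

lemma nevilleStep_apply_of_le (hB : B.IsLowerTriangular) (k : ℕ) {i j : Fin (n + 1)}
    (hij : i ≤ j) : nevilleStep n k B i j = B i j := by
  simp only [nevilleStep, of_apply]
  split_ifs with h
  · have hrj : B ⟨i.1 - 1, by omega⟩ j = 0 :=
      have hrow : i.1 - 1 < j.1 := by have := Fin.le_def.mp hij; omega
      hB (show (⟨i.1 - 1, _⟩ : Fin (n + 1)) < j from Fin.lt_def.mpr hrow)
    rw [hrj, mul_zero, sub_zero]
  · rfl

lemma Matrix.IsLowerTriangular.nevilleStep (hB : B.IsLowerTriangular) (k : ℕ) :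
    (nevilleStep n k B).IsLowerTriangular := fun _ _ hij =>
  (nevilleStep_apply_of_le hB k (le_of_lt hij)).trans (hB hij)

lemma Matrix.IsLowerTriangular.nevilleIter (hB : B.IsLowerTriangular) :
    ∀ k, (nevilleIter n B k).IsLowerTriangular
  | 0 => hB
  | k + 1 => (hB.nevilleIter k).nevilleStep k

lemma nevilleIter_diag (hB : B.IsLowerTriangular) :
    ∀ (k : ℕ) (i : Fin (n + 1)), nevilleIter n B k i i = B i i
  | 0, _ => rfl
  | k + 1, i =>
    (nevilleStep_apply_of_le (hB.nevilleIter k) k le_rfl).trans (nevilleIter_diag hB k i)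

end Neville

lemma sum_range_choose_eq_choose_succ (n k : ℕ) :
    ∑ m ∈ range n, m.choose k = n.choose (k + 1) := by
  induction n with
  | zero => simp
  | succ n ih => rw [sum_range_succ, ih, Nat.choose_succ_succ' n k, add_comm]

theorem neville_Lmat_pivots_and_det (q α : ℝ) (hq : 0 < q) (n : ℕ) :
    (∀ i : ℕ, ∀ hi : 1 ≤ i, ∀ hin : i ≤ n + 1,
      nevilleIter n (Lmat q α n) i ⟨i - 1, by omega⟩ ⟨i - 1, by omega⟩ =
        q ^ ((i - 1).choose 2)) ∧
    (Lmat q α n).det = q ^ ((n + 1).choose 3) := by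
  have hL := isLowerTriangular_Lmat q α n
  refine ⟨fun i _ _ => ?_, ?_⟩
  · rw [nevilleIter_diag hL, Lmat_diag hq.le]
  · rw [det_of_isLowerTriangular _ hL]
    simp_rw [Lmat_diag hq.le]
    rw [prod_pow_eq_pow_sum, Fin.sum_univ_eq_sum_range (fun i => i.choose 2),
      sum_range_choose_eq_choose_succ]
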